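/- For the noiseless self-referential mutation dynamics on a single genome with n orders of meta-parameters, x_{t+1}^i = x_t^i + x_t^{i+1} for 0 ≤ i < n and x_{t+1}^n = x_t^n + x_t^n = 2·x_t^n, the highest-order parameter satisfies x_t^n = 2^t · x_0^n, and if all initial parameters are nonnegative with x_0^n > 0 then the fitness grows at least exponentially: x_t^0 ≥ 2^{t-n} · x_0^n for all t ≥ n. -/
import Mathlib


open Finset

/-- A genome with `n` orders of meta-parameters: a vector `(x^0, …, x^n) ∈ ℝ^(n+1)`. -/
abbrev Genome (n : ℕ) := Fin (n + 1) → ℝ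

/-- For the noiseless self-referential mutation dynamics on a single
genome with `n` orders of meta-parameters, `x_(t+1)^i = x_t^i + x_t^(i+1)` for `0 ≤ i < n`
and `x_(t+1)^n = x_t^n + x_t^n = 2 · x_t^n`, the highest-order parameter satisfies
`x_t^n = 2^t · x_0^n`, and if all initial parameters are nonnegative with `x_0^n > 0` then
the fitness grows at least exponentially: `x_t^0 ≥ 2^(t-n) · x_0^n` for all `t ≥ n`. -/
theorem self_referential_exponential_growth
    {n : ℕ} (x : ℕ → Genome n)
    (hrec : ∀ t : ℕ, ∀ i : Fin (n + 1), ∀ h : (i : ℕ) < n,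
      x (t + 1) i = x t i + x t ⟨(i : ℕ) + 1, by omega⟩)
    (hlast : ∀ t : ℕ, x (t + 1) (Fin.last n) = x t (Fin.last n) + x t (Fin.last n)) :
    (∀ t : ℕ, x t (Fin.last n) = 2 ^ t * x 0 (Fin.last n)) ∧
    ((∀ i : Fin (n + 1), 0 ≤ x 0 i) → 0 < x 0 (Fin.last n) →
      ∀ t : ℕ, n ≤ t → 2 ^ (t - n) * x 0 (Fin.last n) ≤ x t 0) := by
  have hpow : ∀ t : ℕ, x t (Fin.last n) = 2 ^ t * x 0 (Fin.last n) := by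
    intro t
    induction t with
    | zero => simp
    | succ t ih => rw [hlast, ih]; ring
  refine ⟨hpow, ?_⟩
  intro hnn hpos
  have hnonneg : ∀ t : ℕ, ∀ i : Fin (n + 1), 0 ≤ x t i := by
    intro t
    induction t with
    | zero => exact hnn
    | succ t ih =>
      intro i
      by_cases h : (i : ℕ) < n
      · rw [hrec t i h]
        exact add_nonneg (ih i) (ih _)
      · have hi : i = Fin.last n := Fin.ext (by have := i.isLt; simp [Fin.last]; omega)
        rw [hi, hlast]
        exact add_nonneg (ih _) (ih _)
  have key : ∀ k : ℕ, ∀ hk : k ≤ n, ∀ t : ℕ, k ≤ t →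
      2 ^ (t - k) * x 0 (Fin.last n) ≤ x t ⟨n - k, by omega⟩ := by
    intro k
    induction k with
    | zero =>
      intro _ t _
      have : (⟨n - 0, by omega⟩ : Fin (n + 1)) = Fin.last n := Fin.ext (by simp [Fin.last])
      rw [this, Nat.sub_zero, hpow t]
    | succ k ih =>
      intro hk t ht
      induction t, ht using Nat.le_induction with
      | base =>
        have hlt : ((⟨n - (k + 1), by omega⟩ : Fin (n + 1)) : ℕ) < n := by simp; omega
        rw [hrec k ⟨n - (k + 1), by omega⟩ hlt]
        have heq : (⟨((⟨n - (k + 1), by omega⟩ : Fin (n + 1)) : ℕ) + 1, by omega⟩ : Fin (n + 1))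
            = ⟨n - k, by omega⟩ := Fin.ext (by simp; omega)
        rw [heq]
        have h1 := ih (by omega) k le_rfl
        simp only [Nat.sub_self, pow_zero, one_mul] at h1 ⊢
        have h0 := hnonneg k ⟨n - (k + 1), by omega⟩
        linarith
      | succ t ht iht =>
        have hlt : ((⟨n - (k + 1), by omega⟩ : Fin (n + 1)) : ℕ) < n := by simp; omega
        rw [hrec t ⟨n - (k + 1), by omega⟩ hlt]
        have heq : (⟨((⟨n - (k + 1), by omega⟩ : Fin (n + 1)) : ℕ) + 1, by omega⟩ : Fin (n + 1))
            = ⟨n - k, by omega⟩ := Fin.ext (by simp; omega)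
        rw [heq]
        have h1 := ih (by omega) t (by omega)
        have h2 := iht
        have hpe : (2 : ℝ) ^ (t + 1 - (k + 1)) ≤ 2 ^ (t - (k + 1)) + 2 ^ (t - k) := by
          rw [show t + 1 - (k + 1) = t - k from by omega]
          have : (0:ℝ) ≤ 2 ^ (t - (k + 1)) := by positivity
          linarith
        nlinarith
  intro t ht
  have := key n le_rfl t ht
  have h0 : (⟨n - n, by omega⟩ : Fin (n + 1)) = 0 := Fin.ext (by simp)
  rwa [h0] at this
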